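/- For all positive integers n and real q with 0 < q < 1: ∑_{n ≥ j ≥ k ≥ m ≥ p ≥ 1} q^{j+k+m+p}/([j]_q [k]_q [m]_q^3 [p]_q) = ∑_{n ≥ k ≥ m ≥ p ≥ 1} (-1)^{k+1} q^{k(k+1)/2} C_q(n,k) q^{2k+p}/([k]_q^3 [m]_q [p]_q^2). -/

import Mathlib

/-- Gaussian binomial coefficient, vanishing unless `k ≤ n`. -/
noncomputable def qbinom (q : ℝ) (n k : ℕ) : ℝ :=
  if k ≤ n then ∏ j ∈ Finset.Icc 1 k, (1 - q ^ (n - k + j)) / (1 - q ^ j) else 0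

/-- The `q`-analog of a natural number: `[k]_q = (1-q^k)/(1-q)`. -/
noncomputable def qnum (q : ℝ) (k : ℕ) : ℝ := (1 - q ^ k) / (1 - q)

/-!
Write `a_k = q^k/(1-q^k)`, `ε_k = (-1)^(k+1) q^(k choose 2)` and consider the transform
`T f n = ∑_{k=1}^n ε_k C_q(n,k) f k`. Up to the factor `(1-q)^6`, the right-hand side is
`T (a^3 S) n` with `S k = ∑_{m ≤ k} (1-q^m)⁻¹ ∑_{p ≤ m} a_p/(1-q^p)`. Three rules compute `T`:
`T 1 N = 1`; `T (a f) n = ∑_{j ≤ n} a_j T f j`, from the q-hockey-stick identity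
`∑_{j=k}^n a_j C_q(j,k) = C_q(n,k) a_k`; and `T` of the partial sums of `g m/(1-q^m)` is
`T g N/(1-q^N)`, since the tails `∑_{k=m}^N ε_k C_q(N,k)` telescope to
`ε_m C_q(N,m) (1-q^m)/(1-q^N)`. Hence `T S m = (∑_{p ≤ m} a_p)/(1-q^m)^2`, and three applications
of the second rule turn `T (a^3 S) n` into the left-hand side.
-/

open Finset

noncomputable def qSign (q : ℝ) (k : ℕ) : ℝ := (-1) ^ (k + 1) * q ^ k.choose 2

noncomputable def qLambert (q : ℝ) (k : ℕ) : ℝ := q ^ k / (1 - q ^ k)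

noncomputable def qBinomialTransform (q : ℝ) (f : ℕ → ℝ) (n : ℕ) : ℝ :=
  ∑ k ∈ Icc 1 n, qSign q k * qbinom q n k * f k

section

variable {q : ℝ}

lemma one_sub_pow_ne_zero (hq : ∀ j ≠ 0, q ^ j ≠ 1) {j : ℕ} (hj : 0 < j) : 1 - q ^ j ≠ 0 :=
  sub_ne_zero.2 (hq j hj.ne').symm

/-- Valid for all `n k`: when `n < k` the factor `i = n` of the numerator is `1 - q ^ 0 = 0`. -/
lemma qbinom_eq_div (q : ℝ) (n k : ℕ) :
    qbinom q n k = (∏ i ∈ range k, (1 - q ^ (n - i))) / ∏ i ∈ range k, (1 - q ^ (i + 1)) := by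
  rw [qbinom]
  split_ifs with hk
  · rw [prod_div_distrib, ← Ico_add_one_right_eq_Icc, prod_Ico_eq_prod_range,
      prod_Ico_eq_prod_range, Nat.add_sub_cancel,
      ← prod_range_reflect (fun i => 1 - q ^ (n - i))]
    congr 1 <;> refine prod_congr rfl fun i hi => ?_ <;> rw [mem_range] at hi
    · congr 2
      omega
    · rw [add_comm]
  · rw [prod_eq_zero (mem_range.2 (not_le.1 hk)) (by simp), zero_div]

lemma qbinom_of_lt {n k : ℕ} (h : n < k) : qbinom q n k = 0 := if_neg (not_le.2 h)

lemma qbinom_one (q : ℝ) (n : ℕ) : qbinom q n 1 = (1 - q ^ n) / (1 - q) := by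
  simp [qbinom_eq_div]

lemma qbinom_succ_mul (q : ℝ) (n k : ℕ) :
    qbinom q (n + 1) k * (1 - q ^ (n + 1 - k)) = qbinom q n k * (1 - q ^ (n + 1)) := by
  rw [qbinom_eq_div, qbinom_eq_div, div_mul_eq_mul_div, div_mul_eq_mul_div,
    ← prod_range_succ (fun i => 1 - q ^ (n + 1 - i)), prod_range_succ']
  simp only [Nat.add_sub_add_right, Nat.sub_zero, mul_comm]

lemma qbinom_mul_succ (hq : ∀ j ≠ 0, q ^ j ≠ 1) (n k : ℕ) :
    qbinom q n (k + 1) * (1 - q ^ (k + 1)) = qbinom q n k * (1 - q ^ (n - k)) := by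
  rw [qbinom_eq_div, qbinom_eq_div, prod_range_succ, prod_range_succ, div_mul_eq_mul_div,
    div_mul_eq_mul_div, mul_div_mul_right _ _ (one_sub_pow_ne_zero hq k.succ_pos)]

lemma qSign_succ (q : ℝ) (k : ℕ) : qSign q (k + 1) = -(q ^ k * qSign q k) := by
  rw [qSign, qSign, Nat.choose_succ_succ, Nat.choose_one_right, pow_add, pow_succ]
  ring

lemma qbinom_mul_qLambert_add (hq : ∀ j ≠ 0, q ^ j ≠ 1) {n k : ℕ} (hk : 0 < k) (hkn : k ≤ n) :
    qbinom q n k * qLambert q k + qLambert q (n + 1) * qbinom q (n + 1) k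
      = qbinom q (n + 1) k * qLambert q k := by
  have h := qbinom_succ_mul q n k
  have hpow : q ^ k * q ^ (n + 1 - k) = q ^ (n + 1) := by
    rw [← pow_add]
    congr 1
    omega
  have hk' := one_sub_pow_ne_zero hq hk
  have hn' := one_sub_pow_ne_zero hq n.succ_pos
  rw [qLambert, qLambert]
  rw [← hpow] at h hn' ⊢
  field_simp
  linear_combination (-q ^ k) * h

lemma sum_Icc_qLambert_mul_qbinom (hq : ∀ j ≠ 0, q ^ j ≠ 1) {n k : ℕ} (hk : 0 < k)
    (hkn : k ≤ n) :
    ∑ j ∈ Icc k n, qLambert q j * qbinom q j k = qbinom q n k * qLambert q k := by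
  induction n, hkn using Nat.le_induction with
  | base => rw [Icc_self, sum_singleton, mul_comm]
  | succ n hkn ih => rw [sum_Icc_succ_top (by omega), ih, qbinom_mul_qLambert_add hq hk hkn]

lemma sum_Icc_qSign_mul_qbinom (hq : ∀ j ≠ 0, q ^ j ≠ 1) {m N : ℕ} (hN : 0 < N) (hmN : m ≤ N) :
    ∑ k ∈ Icc m N, qSign q k * qbinom q N k
      = qSign q m * qbinom q N m * (1 - q ^ m) / (1 - q ^ N) := by
  set u : ℕ → ℝ := fun k => qSign q k * qbinom q N k * (1 - q ^ k) / (1 - q ^ N) with hu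
  have hstep : ∀ k ∈ Icc m N, qSign q k * qbinom q N k = -(u (k + 1) - u k) := by
    intro k hk
    have h := qbinom_mul_succ hq N k
    have hpow : q ^ k * q ^ (N - k) = q ^ N := by
      rw [← pow_add]
      congr 1
      have := (mem_Icc.1 hk).2
      omega
    have hN' := one_sub_pow_ne_zero hq hN
    rw [← hpow] at hN'
    simp only [hu, qSign_succ, ← hpow]
    field_simp
    linear_combination (-(q ^ k * qSign q k)) * h
  rw [sum_congr rfl hstep, sum_neg_distrib, sum_Icc_sub hmN]
  simp only [hu, qbinom_of_lt N.lt_succ_self]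
  ring

lemma qBinomialTransform_one (hq : ∀ j ≠ 0, q ^ j ≠ 1) {N : ℕ} (hN : 0 < N) :
    qBinomialTransform q (fun _ => 1) N = 1 := by
  simp only [qBinomialTransform, mul_one]
  rw [sum_Icc_qSign_mul_qbinom hq hN hN, qbinom_one]
  have h1 := one_sub_pow_ne_zero hq one_pos
  have hN' := one_sub_pow_ne_zero hq hN
  rw [pow_one] at h1 ⊢
  norm_num [qSign]
  field_simp

lemma qBinomialTransform_qLambert_mul (hq : ∀ j ≠ 0, q ^ j ≠ 1) (f : ℕ → ℝ) (n : ℕ) :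
    qBinomialTransform q (fun k => qLambert q k * f k) n
      = ∑ j ∈ Icc 1 n, qLambert q j * qBinomialTransform q f j := by
  symm
  calc ∑ j ∈ Icc 1 n, qLambert q j * qBinomialTransform q f j
      = ∑ k ∈ Icc 1 n, qSign q k * f k * ∑ j ∈ Icc k n, qLambert q j * qbinom q j k := by
        simp only [qBinomialTransform, mul_sum]
        refine (sum_comm' fun j k => ?_).trans
          (sum_congr rfl fun k _ => sum_congr rfl fun j _ => by ring)
        simp only [mem_Icc]
        omega
    _ = qBinomialTransform q (fun k => qLambert q k * f k) n := by
        refine sum_congr rfl fun k hk => ?_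
        rw [sum_Icc_qLambert_mul_qbinom hq (mem_Icc.1 hk).1 (mem_Icc.1 hk).2]
        ring

lemma qBinomialTransform_qLambert (hq : ∀ j ≠ 0, q ^ j ≠ 1) (N : ℕ) :
    qBinomialTransform q (qLambert q) N = ∑ j ∈ Icc 1 N, qLambert q j := by
  have h := qBinomialTransform_qLambert_mul hq (fun _ => 1) N
  simp only [mul_one] at h
  refine h.trans (sum_congr rfl fun j hj => ?_)
  rw [qBinomialTransform_one hq (mem_Icc.1 hj).1, mul_one]

lemma qBinomialTransform_partialSum_div (hq : ∀ j ≠ 0, q ^ j ≠ 1) (g : ℕ → ℝ) (N : ℕ) :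
    qBinomialTransform q (fun k => ∑ m ∈ Icc 1 k, g m / (1 - q ^ m)) N
      = qBinomialTransform q g N / (1 - q ^ N) := by
  obtain rfl | hN := N.eq_zero_or_pos
  · simp [qBinomialTransform]
  calc qBinomialTransform q (fun k => ∑ m ∈ Icc 1 k, g m / (1 - q ^ m)) N
      = ∑ m ∈ Icc 1 N, g m / (1 - q ^ m) * ∑ k ∈ Icc m N, qSign q k * qbinom q N k := by
        simp only [qBinomialTransform, mul_sum]
        refine (sum_comm' fun k m => ?_).trans
          (sum_congr rfl fun m _ => sum_congr rfl fun k _ => by ring)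
        simp only [mem_Icc]
        omega
    _ = qBinomialTransform q g N / (1 - q ^ N) := by
        rw [qBinomialTransform, sum_div]
        refine sum_congr rfl fun m hm => ?_
        rw [sum_Icc_qSign_mul_qbinom hq hN (mem_Icc.1 hm).2]
        have := one_sub_pow_ne_zero hq (mem_Icc.1 hm).1
        field_simp

lemma qBinomialTransform_partialSum_partialSum (hq : ∀ j ≠ 0, q ^ j ≠ 1) (N : ℕ) :
    qBinomialTransform q
        (fun k => ∑ m ∈ Icc 1 k, (∑ p ∈ Icc 1 m, qLambert q p / (1 - q ^ p)) / (1 - q ^ m)) N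
      = (∑ p ∈ Icc 1 N, qLambert q p) / (1 - q ^ N) ^ 2 := by
  rw [qBinomialTransform_partialSum_div hq, qBinomialTransform_partialSum_div hq,
    qBinomialTransform_qLambert hq, div_div, sq]

lemma sum_pow_div_qnum_eq (hq : ∀ j ≠ 0, q ^ j ≠ 1) (n : ℕ) :
    ∑ j ∈ Icc 1 n, ∑ k ∈ Icc 1 j, ∑ m ∈ Icc 1 k, ∑ p ∈ Icc 1 m,
        q ^ (j + k + m + p) / (qnum q j * qnum q k * qnum q m ^ 3 * qnum q p)
      = (1 - q) ^ 6 * ∑ j ∈ Icc 1 n, qLambert q j * ∑ k ∈ Icc 1 j, qLambert q k *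
          ∑ m ∈ Icc 1 k, qLambert q m * ((∑ p ∈ Icc 1 m, qLambert q p) / (1 - q ^ m) ^ 2) := by
  simp only [mul_sum, sum_div]
  refine sum_congr rfl fun j hj => sum_congr rfl fun k hk =>
    sum_congr rfl fun m hm => sum_congr rfl fun p hp => ?_
  have := one_sub_pow_ne_zero hq (mem_Icc.1 hj).1
  have := one_sub_pow_ne_zero hq (mem_Icc.1 hk).1
  have := one_sub_pow_ne_zero hq (mem_Icc.1 hm).1
  have := one_sub_pow_ne_zero hq (mem_Icc.1 hp).1
  have : 1 - q ≠ 0 := by simpa using one_sub_pow_ne_zero hq one_pos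
  simp only [qnum, qLambert]
  field_simp
  ring

lemma mul_succ_div_two_eq_choose_two_add (k : ℕ) : k * (k + 1) / 2 = k.choose 2 + k := by
  rw [Nat.choose_two_right, ← Nat.triangle_succ, Nat.add_sub_cancel, mul_comm]

lemma sum_qbinom_pow_div_qnum_eq (hq : ∀ j ≠ 0, q ^ j ≠ 1) (n : ℕ) :
    ∑ k ∈ Icc 1 n, ∑ m ∈ Icc 1 k, ∑ p ∈ Icc 1 m,
        (-1 : ℝ) ^ (k + 1) * q ^ (k * (k + 1) / 2) * qbinom q n k *
          (q ^ (2 * k + p) / (qnum q k ^ 3 * qnum q m * qnum q p ^ 2))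
      = (1 - q) ^ 6 * qBinomialTransform q (fun k => qLambert q k * (qLambert q k *
          (qLambert q k * ∑ m ∈ Icc 1 k,
            (∑ p ∈ Icc 1 m, qLambert q p / (1 - q ^ p)) / (1 - q ^ m)))) n := by
  simp only [qBinomialTransform, mul_sum, sum_div]
  refine sum_congr rfl fun k hk => sum_congr rfl fun m hm => sum_congr rfl fun p hp => ?_
  have := one_sub_pow_ne_zero hq (mem_Icc.1 hk).1
  have := one_sub_pow_ne_zero hq (mem_Icc.1 hm).1
  have := one_sub_pow_ne_zero hq (mem_Icc.1 hp).1
  rw [mul_succ_div_two_eq_choose_two_add, pow_add]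
  simp only [qSign, qnum, qLambert]
  field_simp
  ring

end

theorem example1_general (n : ℕ) (q : ℝ) (hq0 : 0 < q) (hq1 : q < 1) :
    (∑ j ∈ Finset.Icc 1 n, ∑ k ∈ Finset.Icc 1 j, ∑ m ∈ Finset.Icc 1 k,
      ∑ p ∈ Finset.Icc 1 m,
        q ^ (j + k + m + p) / (qnum q j * qnum q k * (qnum q m) ^ 3 * qnum q p))
    = ∑ k ∈ Finset.Icc 1 n, ∑ m ∈ Finset.Icc 1 k, ∑ p ∈ Finset.Icc 1 m,
        (-1 : ℝ) ^ (k + 1) * q ^ (k * (k + 1) / 2) * qbinom q n k *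
          (q ^ (2 * k + p) / ((qnum q k) ^ 3 * qnum q m * (qnum q p) ^ 2)) := by
  have hq : ∀ j ≠ 0, q ^ j ≠ 1 := fun j hj => (pow_lt_one₀ hq0.le hq1 hj).ne
  rw [sum_pow_div_qnum_eq hq, sum_qbinom_pow_div_qnum_eq hq]
  simp only [qBinomialTransform_qLambert_mul hq, qBinomialTransform_partialSum_partialSum hq]

theorem example1 (n : ℕ) (hn : 0 < n) (q : ℝ) (hq0 : 0 < q) (hq1 : q < 1) :
    (∑ j ∈ Finset.Icc 1 n, ∑ k ∈ Finset.Icc 1 j, ∑ m ∈ Finset.Icc 1 k,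
      ∑ p ∈ Finset.Icc 1 m,
        q ^ (j + k + m + p) / (qnum q j * qnum q k * (qnum q m) ^ 3 * qnum q p))
    = ∑ k ∈ Finset.Icc 1 n, ∑ m ∈ Finset.Icc 1 k, ∑ p ∈ Finset.Icc 1 m,
        (-1 : ℝ) ^ (k + 1) * q ^ (k * (k + 1) / 2) * qbinom q n k *
          (q ^ (2 * k + p) / ((qnum q k) ^ 3 * qnum q m * (qnum q p) ^ 2)) :=
  example1_general n q hq0 hq1
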